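/- Let κ > 0, ω_d ∈ ℝ, and let ξ₁, ξ₂ : ℝ → ℂ be measurable functions such that t ↦ e^{(κ/2)t} ξ_j(t) is integrable on (−∞, a] for every a ∈ ℝ (j = 1, 2). Define ν_j(t) = ξ_j(t) − κ ∫_{−∞}^{t} e^{−(κ/2 + i·ω_d)(t − r)} ξ_j(r) dr. Then for all p₁ ≤ p₂: κ² ∫_{p₁}^{p₂} e^{−(κ/2 + i·ω_d)(p₂ − τ)} e^{−(κ/2 − i·ω_d)(τ − p₁)} · [ ξ₁(τ) ∫_{−∞}^{τ} e^{−(κ/2 + i·ω_d)(τ − τ₂)} ξ₂(τ₂) dτ₂ + ξ₂(τ) ∫_{−∞}^{τ} e^{−(κ/2 + i·ω_d)(τ − τ₂)} ξ₁(τ₂) dτ₂ ] dτ = 2κ · e^{−(κ/2)(p₂ − p₁) − i·ω_d·(p₁ + p₂)} ∫_{p₁}^{p₂} e^{2 i·ω_d τ} [ ξ₁(τ)ξ₂(τ) − (ξ₁(τ)ν₂(τ) + ν₁(τ)ξ₂(τ))/2 ] dτ. -/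
import Mathlib


open MeasureTheory Complex

/-- `ker κ ω_d x = e^{−(κ/2 + i ω_d) x}`. -/
noncomputable def ker (κ ω_d : ℝ) (x : ℝ) : ℂ :=
  Complex.exp (-((κ : ℂ) / 2 + Complex.I * (ω_d : ℂ)) * (x : ℂ))

/-- `kerStar κ ω_d x = e^{−(κ/2 − i ω_d) x}`. -/
noncomputable def kerStar (κ ω_d : ℝ) (x : ℝ) : ℂ :=
  Complex.exp (-((κ : ℂ) / 2 - Complex.I * (ω_d : ℂ)) * (x : ℂ))

theorem stmt_9 (κ ω_d : ℝ) (hκ : 0 < κ) (ξ₁ ξ₂ : ℝ → ℂ)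
    (hm₁ : Measurable ξ₁) (hm₂ : Measurable ξ₂)
    (hi₁ : ∀ a : ℝ, IntegrableOn (fun t => (Real.exp (κ / 2 * t) : ℂ) * ξ₁ t) (Set.Iic a))
    (hi₂ : ∀ a : ℝ, IntegrableOn (fun t => (Real.exp (κ / 2 * t) : ℂ) * ξ₂ t) (Set.Iic a))
    (ν₁ ν₂ : ℝ → ℂ)
    (hν₁ : ∀ t : ℝ, ν₁ t = ξ₁ t - (κ : ℂ) * ∫ r in Set.Iic t, ker κ ω_d (t - r) * ξ₁ r)
    (hν₂ : ∀ t : ℝ, ν₂ t = ξ₂ t - (κ : ℂ) * ∫ r in Set.Iic t, ker κ ω_d (t - r) * ξ₂ r) :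
    ∀ p₁ p₂ : ℝ, p₁ ≤ p₂ →
      (κ : ℂ) ^ 2 *
        (∫ τ in p₁..p₂, ker κ ω_d (p₂ - τ) * kerStar κ ω_d (τ - p₁) *
          (ξ₁ τ * (∫ τ₂ in Set.Iic τ, ker κ ω_d (τ - τ₂) * ξ₂ τ₂)
            + ξ₂ τ * (∫ τ₂ in Set.Iic τ, ker κ ω_d (τ - τ₂) * ξ₁ τ₂)))
      = 2 * (κ : ℂ) *
          Complex.exp (-((κ : ℂ) / 2) * ((p₂ : ℂ) - (p₁ : ℂ))
            - Complex.I * (ω_d : ℂ) * ((p₁ : ℂ) + (p₂ : ℂ))) *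
        (∫ τ in p₁..p₂, Complex.exp (2 * Complex.I * (ω_d : ℂ) * (τ : ℂ)) *
          (ξ₁ τ * ξ₂ τ - (ξ₁ τ * ν₂ τ + ν₁ τ * ξ₂ τ) / 2)) := by
  intro p₁ p₂ hp
  have hκ' : (κ : ℂ) ≠ 0 := by exact_mod_cast hκ.ne'
  rw [← intervalIntegral.integral_const_mul, ← intervalIntegral.integral_const_mul]
  apply intervalIntegral.integral_congr
  intro τ _
  have hA : (∫ τ₂ in Set.Iic τ, ker κ ω_d (τ - τ₂) * ξ₂ τ₂) = (ξ₂ τ - ν₂ τ) / κ := by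
    rw [eq_div_iff hκ', hν₂ τ]; ring
  have hB : (∫ τ₂ in Set.Iic τ, ker κ ω_d (τ - τ₂) * ξ₁ τ₂) = (ξ₁ τ - ν₁ τ) / κ := by
    rw [eq_div_iff hκ', hν₁ τ]; ring
  have hker : ker κ ω_d (p₂ - τ) * kerStar κ ω_d (τ - p₁)
      = Complex.exp (-((κ : ℂ) / 2) * ((p₂ : ℂ) - (p₁ : ℂ))
            - Complex.I * (ω_d : ℂ) * ((p₁ : ℂ) + (p₂ : ℂ)))
        * Complex.exp (2 * Complex.I * (ω_d : ℂ) * (τ : ℂ)) := by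
    rw [ker, kerStar, ← Complex.exp_add, ← Complex.exp_add]
    congr 1
    push_cast
    ring
  simp only [hA, hB, hker]
  field_simp
  ring
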